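/- If G is an ancestral graph satisfying the boundary containment property, then the graph obtained from G by dropping all arrowheads at simplicial vertices (replacing v←w by v−w and v↔w by v→w whenever v is simplicial) is again an ancestral graph. -/
import Mathlib


/-- Possible edge types between an ordered pair of distinct vertices of a
simple mixed graph.  `arrowTo` at `(v, w)` means `v → w`, `arrowFrom` means
`v ← w`, `undir` means `v − w` and `bidir` means `v ↔ w`. -/
inductive EType : Type
  | none | undir | arrowTo | arrowFrom | bidir
deriving DecidableEq

/-- The edge type seen from the reversed ordered pair of vertices. -/
def EType.mirror : EType → EType
  | .none => .none
  | .undir => .undir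
  | .arrowTo => .arrowFrom
  | .arrowFrom => .arrowTo
  | .bidir => .bidir

/-- A simple mixed graph: at most one edge (undirected, directed or
bi-directed) between any two distinct vertices, and no self loops. -/
structure MixedGraph (V : Type) where
  E : V → V → EType
  no_loop : ∀ v, E v v = .none
  symm : ∀ v w, E w v = (E v w).mirror

/-- `(a, b, c)` are three consecutive vertices on the path `p`. -/
def ConsecTriple {V : Type} (p : List V) (a b c : V) : Prop :=
  ∃ l1 l2, p = l1 ++ a :: b :: c :: l2

namespace MixedGraph

variable {V : Type} (G : MixedGraph V)

/-- `v − w` is an edge of `G`. -/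
def Undir (v w : V) : Prop := G.E v w = .undir

/-- `v → w` is an edge of `G`. -/
def Dir (v w : V) : Prop := G.E v w = .arrowTo

/-- `v ↔ w` is an edge of `G`. -/
def Bidir (v w : V) : Prop := G.E v w = .bidir

/-- `v` and `w` are adjacent (joined by some edge). -/
def Adj (v w : V) : Prop := G.E v w ≠ .none

/-- The edge between `a` and `b` has an arrowhead at `b`. -/
def HeadAt (a b : V) : Prop := G.E a b = .arrowTo ∨ G.E a b = .bidir

/-- Closed boundary: `v` together with its adjacent vertices. -/
def Bd (v : V) : Set V := insert v {w | G.Adj v w}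

/-- A set of vertices is complete if all of its pairs of distinct
vertices are adjacent. -/
def Complete (S : Set V) : Prop := ∀ v ∈ S, ∀ w ∈ S, v ≠ w → G.Adj v w

/-- A vertex is simplicial if its closed boundary is complete. -/
def Simplicial (v : V) : Prop := G.Complete (G.Bd v)

/-- `v` is an ancestor of `w`: `v = w` or there is a directed path from
`v` to `w`. -/
def Anc (v w : V) : Prop := Relation.ReflTransGen G.Dir v w

/-- The set of ancestors of vertices in `C`. -/
def anSet (C : Set V) : Set V := {v | ∃ c ∈ C, G.Anc v c}

/-- `G` is an ancestral graph. -/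
def Ancestral : Prop :=
  (∀ v w, G.Dir v w → ¬ G.Anc w v) ∧
  (∀ v w, G.Undir v w → ∀ u, ¬ G.HeadAt u v) ∧
  (∀ v w, G.Bidir v w → ¬ G.Anc v w)

/-- The boundary containment property. -/
def BdContain : Prop :=
  (∀ v w, G.Undir v w → G.Bd v = G.Bd w) ∧
  (∀ v w, G.Dir v w → G.Bd v ⊆ G.Bd w)

/-- `b` is a collider between consecutive neighbours `a` and `c`. -/
def Collider (a b c : V) : Prop := G.HeadAt a b ∧ G.HeadAt c b

/-- A path: a list of distinct vertices, consecutive ones adjacent. -/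
def IsPath (p : List V) : Prop := p.Nodup ∧ p.Chain' G.Adj

/-- `p` is an m-connecting path given `C`: every non-collider on it is
outside `C` and every collider on it is an ancestor of `C`. -/
def IsMConnPath (C : Set V) (p : List V) : Prop :=
  G.IsPath p ∧
  ∀ a b c, ConsecTriple p a b c →
    (G.Collider a b c → b ∈ G.anSet C) ∧ (¬ G.Collider a b c → b ∉ C)

/-- `v` and `w` are m-connected given `C`. -/
def MConn (v w : V) (C : Set V) : Prop :=
  ∃ p, G.IsMConnPath C p ∧ p.head? = some v ∧ p.getLast? = some w

/-- `v` and `w` are m-separated given `C`. -/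
def MSep (v w : V) (C : Set V) : Prop := ¬ G.MConn v w C

/-- A maximal (ancestral) graph: every pair of distinct non-adjacent
vertices is m-separated given some set. -/
def Maximal : Prop :=
  ∀ v w, v ≠ w → ¬ G.Adj v w → ∃ C : Set V, v ∉ C ∧ w ∉ C ∧ G.MSep v w C

/-- `G` is a bi-directed graph. -/
def Bidirected : Prop := ∀ v w, G.E v w = .none ∨ G.E v w = .bidir

/-- `G` is an undirected graph. -/
def UndirectedG : Prop := ∀ v w, G.E v w = .none ∨ G.E v w = .undir

/-- `G` is a directed acyclic graph. -/
def IsDAG : Prop :=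
  (∀ v w, G.E v w = .none ∨ G.E v w = .arrowTo ∨ G.E v w = .arrowFrom) ∧
  (∀ v w, G.Dir v w → ¬ G.Anc w v)

/-- `G` and `H` have the same skeleton. -/
def SameSkeleton (H : MixedGraph V) : Prop := ∀ v w, G.Adj v w ↔ H.Adj v w

/-- `G` and `H` are Markov equivalent: their m-separation relations
coincide. -/
def MarkovEquiv (H : MixedGraph V) : Prop :=
  ∀ v w (C : Set V), v ≠ w → v ∉ C → w ∉ C → (G.MSep v w C ↔ H.MSep v w C)

open Classical in
/-- The edge map obtained from `G` by dropping all arrowheads at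
simplicial vertices. -/
noncomputable def dropE (v w : V) : EType :=
  match G.E v w with
  | .none => .none
  | .undir => .undir
  | .arrowTo => if G.Simplicial w then .undir else .arrowTo
  | .arrowFrom => if G.Simplicial v then .undir else .arrowFrom
  | .bidir =>
      if G.Simplicial v then (if G.Simplicial w then .undir else .arrowTo)
      else (if G.Simplicial w then .arrowFrom else .bidir)

/-- The graph obtained from `G` by dropping all arrowheads at simplicial
vertices; for a bi-directed graph `G` this is the simplicial graph `Gˢ`. -/
noncomputable def drop : MixedGraph V where
  E := G.dropE
  no_loop v := by simp [dropE, G.no_loop]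
  symm v w := by
    unfold dropE
    rw [G.symm v w]
    cases h : G.E v w <;>
      simp only [EType.mirror] <;> split_ifs <;> simp_all [EType.mirror]

open Classical in
/-- The edge map of the minimally oriented graph `G^min_<`: starting from
the simplicial graph, each bi-directed edge `v ↔ w` with `Bd v ⊆ Bd w`
and `v < w` is replaced by `v → w`. -/
noncomputable def gminE [LinearOrder V] (v w : V) : EType :=
  match G.dropE v w with
  | .bidir =>
      if G.Bd v ⊆ G.Bd w ∧ v < w then .arrowTo
      else if G.Bd w ⊆ G.Bd v ∧ w < v then .arrowFrom
      else .bidir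
  | e => e

/-- The graph `G^min_<` produced by Algorithm 4.2 from `G` and the total
order on `V`. -/
noncomputable def gmin [LinearOrder V] : MixedGraph V where
  E := G.gminE
  no_loop v := by
    have h := G.drop.no_loop v
    simp only [drop] at h
    simp [gminE, h]
  symm v w := by
    have h := G.drop.symm v w
    simp only [drop] at h
    unfold gminE
    rw [h]
    cases hE : G.dropE v w <;> simp only [EType.mirror]
    case bidir =>
      by_cases c1 : G.Bd v ⊆ G.Bd w ∧ v < w
      · have c2 : ¬ (G.Bd w ⊆ G.Bd v ∧ w < v) := fun h' => lt_asymm c1.2 h'.2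
        simp [c1, c2, EType.mirror]
      · by_cases c2 : G.Bd w ⊆ G.Bd v ∧ w < v
        · simp [c1, c2, EType.mirror]
        · simp [c1, c2, EType.mirror]

/-- Total number of arrowheads of `G`: the number of directed edges plus
twice the number of bi-directed edges. -/
noncomputable def arr : ℕ :=
  {p : V × V | G.Dir p.1 p.2}.ncard + {p : V × V | G.Bidir p.1 p.2}.ncard

end MixedGraph

/-- `Gm` is a minimally oriented graph for `G`. -/
def MinOriented {V : Type} (G Gm : MixedGraph V) : Prop :=
  Gm.Ancestral ∧ Gm.Maximal ∧ G.MarkovEquiv Gm ∧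
  ∀ H : MixedGraph V, H.Ancestral → H.Maximal → G.MarkovEquiv H → Gm.arr ≤ H.arr

namespace MixedGraph

variable {V : Type} (G : MixedGraph V)

lemma dropDir_cases {v w : V} (h : G.drop.Dir v w) :
    (G.Dir v w ∧ ¬ G.Simplicial w) ∨
      (G.Bidir v w ∧ G.Simplicial v ∧ ¬ G.Simplicial w) := by
  simp only [drop, Dir, Bidir, dropE] at h ⊢
  cases hE : G.E v w <;> rw [hE] at h <;> (try split_ifs at h) <;> simp_all

lemma dropUndir_cases {v w : V} (h : G.drop.Undir v w) :
    G.Undir v w ∨ G.Simplicial v ∨ (G.Dir v w ∧ G.Simplicial w) := by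
  simp only [drop, Undir, Dir, dropE] at h ⊢
  cases hE : G.E v w <;> rw [hE] at h <;> (try split_ifs at h) <;> simp_all

lemma dropBidir_cases {v w : V} (h : G.drop.Bidir v w) :
    G.Bidir v w ∧ ¬ G.Simplicial v ∧ ¬ G.Simplicial w := by
  simp only [drop, Bidir, dropE] at h ⊢
  cases hE : G.E v w <;> rw [hE] at h <;> (try split_ifs at h) <;> simp_all

lemma dropHeadAt_cases {u v : V} (h : G.drop.HeadAt u v) :
    G.HeadAt u v ∧ ¬ G.Simplicial v := by
  simp only [drop, HeadAt, dropE] at h ⊢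
  cases hE : G.E u v <;> rw [hE] at h <;> (try split_ifs at h) <;> simp_all

lemma simplicial_of_subset {v w : V} (hsub : G.Bd v ⊆ G.Bd w)
    (hw : G.Simplicial w) : G.Simplicial v := by
  intro a ha b hb hab
  exact hw a (hsub ha) b (hsub hb) hab

lemma drop_anc {w : V} : ∀ {v : V}, G.drop.Anc v w → ¬ G.Simplicial v → G.Anc v w := by
  intro v h
  induction h using Relation.ReflTransGen.head_induction_on with
  | refl => intro _; exact Relation.ReflTransGen.refl
  | head hrel _ ih =>
    intro hv
    rcases G.dropDir_cases hrel with ⟨hd, hns⟩ | ⟨_, hs, _⟩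
    · exact Relation.ReflTransGen.head hd (ih hns)
    · exact absurd hs hv

end MixedGraph

/-- Dropping all arrowheads at simplicial vertices of an
ancestral graph with the boundary containment property again yields an
ancestral graph. -/
theorem stmt7 {V : Type} (G : MixedGraph V) (hA : G.Ancestral) (hB : G.BdContain) :
    (G.drop).Ancestral := by
  obtain ⟨hA1, hA2, hA3⟩ := hA
  refine ⟨?_, ?_, ?_⟩
  · intro v w hd hanc
    rcases G.dropDir_cases hd with ⟨hd', hnw⟩ | ⟨hb, hs, hnw⟩
    · exact hA1 v w hd' (G.drop_anc hanc hnw)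
    · have hbw : G.Bidir w v := by
        simp only [MixedGraph.Bidir] at hb ⊢
        rw [G.symm v w, hb]; rfl
      exact hA3 w v hbw (G.drop_anc hanc hnw)
  · intro v w hu u hh
    obtain ⟨hhu, hnv⟩ := G.dropHeadAt_cases hh
    rcases G.dropUndir_cases hu with h1 | h2 | ⟨h3, h3w⟩
    · exact hA2 v w h1 u hhu
    · exact hnv h2
    · exact hnv (G.simplicial_of_subset (hB.2 v w h3) h3w)
  · intro v w hb hanc
    obtain ⟨hb', hnv, _⟩ := G.dropBidir_cases hb
    exact hA3 v w hb' (G.drop_anc hanc hnv)
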